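/- Let μ be a nonnegative Radon measure on M, 0 < T ≤ ∞, and define Ψ[u](x,t) := ∫_M K(x,y,t) dμ(y) + ∫₀^t ∫_M K(x,y,t−s) u(y,s)^p dV_g(y) ds, where K is the heat kernel of (M,g). If there exists a measurable function ū on M×(0,T) with 0 ≤ ū < ∞ and ū ≥ Ψ[ū] a.e. in M×(0,T) (a supersolution), then there exists a measurable function u on M×(0,T) with 0 ≤ u < ∞ a.e. satisfying u = Ψ[u] a.e. in M×(0,T) (an integral solution). -/

import Mathlib

/-!
Common abstract setting.  Mathlib does not currently have Riemannian metrics, volume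
forms, Laplace–Beltrami operators, heat kernels, injectivity radii or sectional
curvature, so the structure `RiemannianData` below carries these abstractly as data
for a connected complete Riemannian `N`-manifold `(M,g)` without boundary with
positive injectivity radius and (when `N ≥ 2`) sectional curvature bounded in
absolute value by `κ`.
-/

open MeasureTheory Metric Filter Topology
open scoped ENNReal NNReal

noncomputable section

/-- The Fujita exponent `p_F = (N+2)/N`. -/
def fujitaExp (N : ℕ) : ℝ := ((N : ℝ) + 2) / N

/-- Abstract data for a connected complete Riemannian `N`-manifold `(M,g)` without
boundary: `vol` is the Riemannian volume measure, `lap` the Laplace–Beltrami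
operator, `C21 u T` the predicate “`u ∈ C^{2,1}(M × (0,T))`”, `testFn φ T` the
predicate “`φ ∈ C₀^∞(M × [0,T))`”, `K` the (minimal) heat kernel of `(M,g)`,
`injRad` the injectivity radius (assumed positive) and `κ ≥ 0` the bound with
`|sec(M)| ≤ κ` (imposed when `N ≥ 2`). -/
structure RiemannianData (N : ℕ) (M : Type) [MetricSpace M] [MeasurableSpace M] where
  /-- the Riemannian volume measure `dV_g` -/
  vol : Measure M
  vol_loc_finite : IsFiniteMeasureOnCompacts vol
  /-- the Laplace–Beltrami operator of `(M,g)` -/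
  lap : (M → ℝ) → M → ℝ
  /-- `C21 u T` ↔ `u ∈ C^{2,1}(M × (0,T))` -/
  C21 : (M → ℝ → ℝ) → ℝ → Prop
  /-- `testFn φ T` ↔ `φ ∈ C₀^∞(M × [0,T))` -/
  testFn : (M → ℝ → ℝ) → ℝ → Prop
  /-- the heat kernel `K(x,y,t)` of `(M,g)` -/
  K : M → M → ℝ → ℝ
  K_meas : Measurable fun q : M × M × ℝ => K q.1 q.2.1 q.2.2
  K_pos : ∀ x y t, 0 < t → 0 < K x y t
  K_symm : ∀ x y t, K x y t = K y x t
  K_semigroup : ∀ x z s t, 0 < s → 0 < t →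
    ∫ y, K x y s * K y z t ∂vol = K x z (s + t)
  K_mass : ∀ x t, 0 < t → ∫ y, K x y t ∂vol = 1
  K_heat : ∀ y t, 0 < t → ∀ x,
    deriv (fun s => K x y s) t = lap (fun x' => K x' y t) x
  K_init : ∀ ψ : M → ℝ, Continuous ψ → HasCompactSupport ψ → ∀ x : M,
    Tendsto (fun t => ∫ y, K x y t * ψ y ∂vol) (𝓝[>] (0:ℝ)) (𝓝 (ψ x))
  /-- the injectivity radius `inj(M)` -/
  injRad : ℝ≥0∞
  injRad_pos : 0 < injRad
  /-- the curvature bound: `|sec(M)| ≤ κ` when `N ≥ 2` -/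
  κ : ℝ
  κ_nonneg : 0 ≤ κ

namespace RiemannianData

variable {N : ℕ} {M : Type} [MetricSpace M] [MeasurableSpace M]

/-- `ρ_∞ = min{inj(M)/4, π/(4√κ)}`, interpreted as `∞` when `κ = 0` or `N = 1`. -/
def rhoInf (G : RiemannianData N M) : ℝ≥0∞ :=
  min (G.injRad / 4)
    (if G.κ = 0 ∨ N = 1 then ⊤ else ENNReal.ofReal (Real.pi / (4 * Real.sqrt G.κ)))

/-- `ρ_T = min{√T, inj(M)/4, π/(4√κ)}` (a real number, since `√T < ∞`). -/
def rhoT (G : RiemannianData N M) (T : ℝ) : ℝ :=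
  (min (ENNReal.ofReal (Real.sqrt T)) G.rhoInf).toReal

/-- `u` satisfies `u_t - Δu = u^p` in `M × (0,T)`. -/
def SatisfiesPDE (G : RiemannianData N M) (p : ℝ) (u : M → ℝ → ℝ) (T : ℝ) : Prop :=
  ∀ x : M, ∀ t : ℝ, 0 < t → t < T →
    deriv (fun s => u x s) t = G.lap (fun y => u y t) x + u x t ^ p

/-- `u(·,t) dV_g → μ` weakly-* as `t → 0⁺`. -/
def HasInitialTrace (G : RiemannianData N M) (u : M → ℝ → ℝ) (μ : Measure M) : Prop :=
  ∀ ψ : M → ℝ, Continuous ψ → HasCompactSupport ψ →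
    Tendsto (fun t => ∫ x, ψ x * u x t ∂G.vol) (𝓝[>] (0:ℝ)) (𝓝 (∫ x, ψ x ∂μ))

/-- `u(·,t) dV_g → u₀ dV_g` weakly-* as `t → 0⁺`. -/
def HasInitialData (G : RiemannianData N M) (u : M → ℝ → ℝ) (u₀ : M → ℝ) : Prop :=
  ∀ ψ : M → ℝ, Continuous ψ → HasCompactSupport ψ →
    Tendsto (fun t => ∫ x, ψ x * u x t ∂G.vol) (𝓝[>] (0:ℝ))
      (𝓝 (∫ x, ψ x * u₀ x ∂G.vol))

/-- `u` is a solution of `u_t - Δu = u^p` on `M × [0,T)` with initial trace `μ`: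
`u ≥ 0`, `u ∈ C^{2,1}(M × (0,T))`, the equation holds and `μ` is the initial trace. -/
def IsSolution (G : RiemannianData N M) (p T : ℝ) (μ : Measure M) (u : M → ℝ → ℝ) : Prop :=
  (∀ x : M, ∀ t : ℝ, 0 < t → t < T → 0 ≤ u x t) ∧
    G.C21 u T ∧ G.SatisfiesPDE p u T ∧ G.HasInitialTrace u μ

/-- `u` is a solution of `u_t - Δu = u^p` on `M × [0,T)` with initial data the
function `u₀`. -/
def IsSolutionFn (G : RiemannianData N M) (p T : ℝ) (u₀ : M → ℝ) (u : M → ℝ → ℝ) : Prop :=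
  (∀ x : M, ∀ t : ℝ, 0 < t → t < T → 0 ≤ u x t) ∧
    G.C21 u T ∧ G.SatisfiesPDE p u T ∧ G.HasInitialData u u₀

/-- `Ψ[u](x,t) = ∫_M K(x,y,t) dμ(y) + ∫₀ᵗ ∫_M K(x,y,t-s) u(y,s)^p dV_g(y) ds`,
as an `ℝ≥0∞`-valued integral. -/
def PsiL (G : RiemannianData N M) (p : ℝ) (μ : Measure M) (u : M → ℝ → ℝ)
    (x : M) (t : ℝ) : ℝ≥0∞ :=
  (∫⁻ y, ENNReal.ofReal (G.K x y t) ∂μ) +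
    ∫⁻ s in Set.Ioo (0:ℝ) t, ∫⁻ y, ENNReal.ofReal (G.K x y (t - s) * u y s ^ p) ∂G.vol

/-- `L[f](x,t) = ∫_M K(x,y,t) f(y) dV_g(y)` as an `ℝ≥0∞`-valued integral. -/
def heatL (G : RiemannianData N M) (f : M → ℝ) (x : M) (t : ℝ) : ℝ≥0∞ :=
  ∫⁻ y, ENNReal.ofReal (G.K x y t * f y) ∂G.vol

/-- The Morrey-type norm
`‖f‖_Y = sup_{x∈M} sup_{0<ρ<ρ_∞} φ(ρ)⁻¹ ρ^{-(N-2/(p-1))} ∫_{B(x,ρ)} |f| dV_g`,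
where `φ(ρ) = (log(e+1/ρ))^{-1/(p-1)}`. -/
def Ynorm (G : RiemannianData N M) (p : ℝ) (f : M → ℝ) : ℝ≥0∞ :=
  ⨆ x : M, ⨆ ρ : ℝ, ⨆ _ : 0 < ρ ∧ ENNReal.ofReal ρ < G.rhoInf,
    ENNReal.ofReal (Real.log (Real.exp 1 + 1 / ρ) ^ ((1:ℝ)/(p-1)) *
        ρ ^ (-((N:ℝ) - 2/(p-1)))) *
      ∫⁻ y in Metric.ball x ρ, ENNReal.ofReal |f y| ∂G.vol

end RiemannianData

/-- `sup_{z ∈ M} μ(B(z,ρ))`. -/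
def supBall {M : Type} [MetricSpace M] [MeasurableSpace M] (μ : Measure M) (ρ : ℝ) : ℝ≥0∞ :=
  ⨆ z : M, μ (Metric.ball z ρ)

/-- The uniformly local `L^q` norm `‖f‖_{L^q_{uloc,ρ}}` (with extended-real radius `ρ`). -/
def ulocNorm {M : Type} [MetricSpace M] [MeasurableSpace M] (vol : Measure M)
    (q : ℝ) (ρ : ℝ≥0∞) (f : M → ℝ) : ℝ≥0∞ :=
  ⨆ z : M, (∫⁻ x in EMetric.ball z ρ, ENNReal.ofReal (|f x| ^ q) ∂vol) ^ (1/q)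

/-- The cutoff function `η ∈ C^∞(ℝ)` with `0 ≤ η ≤ 1`, `η' ≤ 0`, `η = 0` on `[1,∞)`,
`η = 1` on `(-∞,1/2]` and `sup{z : η z > 0} = 1`. -/
def CutoffFn (η : ℝ → ℝ) : Prop :=
  ContDiff ℝ (⊤ : ℕ∞) η ∧ (∀ z, 0 ≤ η z ∧ η z ≤ 1) ∧ (∀ z, deriv η z ≤ 0) ∧
    (∀ z : ℝ, 1 ≤ z → η z = 0) ∧ (∀ z : ℝ, z ≤ 1/2 → η z = 1) ∧
    sSup {z : ℝ | 0 < η z} = 1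

lemma aux_sigmaFinite_of_pos {α : Type*} [MeasurableSpace α] (μ : Measure α)
    (f : α → ℝ) (hf : Measurable f) (hpos : ∀ y, 0 < f y)
    (hfin : ∫⁻ y, ENNReal.ofReal (f y) ∂μ ≠ ∞) : SigmaFinite μ := by
  refine ⟨⟨⟨fun n => {y | ((n : ℝ) + 1)⁻¹ < f y}, fun _ => trivial, ?_, ?_⟩⟩⟩
  · intro n
    set ε : ℝ≥0∞ := ENNReal.ofReal ((n : ℝ) + 1)⁻¹ with hε
    have hε0 : ε ≠ 0 := by
      simp [hε, ENNReal.ofReal_eq_zero, not_le]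
      positivity
    have key := mul_meas_ge_le_lintegral₀ (μ := μ)
      (hf.ennreal_ofReal.aemeasurable) ε
    have hsub : {y | ((n : ℝ) + 1)⁻¹ < f y} ⊆ {y | ε ≤ ENNReal.ofReal (f y)} :=
      fun y hy => ENNReal.ofReal_le_ofReal hy.le
    have hlt : μ {y | ε ≤ ENNReal.ofReal (f y)} < ∞ := by
      by_contra hcon
      push_neg at hcon
      have h2 : μ {y | ε ≤ ENNReal.ofReal (f y)} = ∞ := top_le_iff.mp hcon
      rw [h2, ENNReal.mul_top hε0] at key
      exact hfin (top_le_iff.mp key)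
    exact lt_of_le_of_lt (measure_mono hsub) hlt
  · apply Set.eq_univ_iff_forall.mpr
    intro y
    obtain ⟨n, hn⟩ := exists_nat_gt (f y)⁻¹
    refine Set.mem_iUnion.mpr ⟨n, ?_⟩
    have h0 : 0 < f y := hpos y
    have h1 : (f y)⁻¹ < (n : ℝ) + 1 := hn.trans (lt_add_one _)
    have h2 : ((n : ℝ) + 1)⁻¹ < ((f y)⁻¹)⁻¹ := inv_strictAnti₀ (inv_pos.mpr h0) h1
    simpa [inv_inv] using h2

lemma aux_ofReal_mul_rpow_mono {k a b p : ℝ} (ha : 0 ≤ a) (hab : a ≤ b) (hp : 0 ≤ p) :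
    ENNReal.ofReal (k * a ^ p) ≤ ENNReal.ofReal (k * b ^ p) := by
  rcases le_or_gt k 0 with hk | hk
  · have h1 : k * a ^ p ≤ 0 := mul_nonpos_iff.mpr (Or.inr ⟨hk, Real.rpow_nonneg ha p⟩)
    simp [ENNReal.ofReal_eq_zero.mpr h1]
  · exact ENNReal.ofReal_le_ofReal
      (mul_le_mul_of_nonneg_left (Real.rpow_le_rpow ha hab hp) hk.le)

/-- Lemma 4.2, monotone iteration: a supersolution of the integral
equation yields an integral solution.  Here the time interval `(0,T)` with
`0 < T ≤ ∞` is encoded by `T : ℝ≥0∞` and the set `{t | 0 < t ∧ (t : ℝ≥0∞) < T}`,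
and "a.e. in `M × (0,T)`" refers to the product of `vol` with Lebesgue measure
restricted to that time set. -/
theorem statement11 :
    ∀ N : ℕ, 1 ≤ N → ∀ p : ℝ, 1 < p →
    ∀ (M : Type) [MetricSpace M] [MeasurableSpace M] [BorelSpace M]
      [ConnectedSpace M] [CompleteSpace M],
    ∀ (G : RiemannianData N M),
    ∀ (μ : Measure M), IsFiniteMeasureOnCompacts μ →
    ∀ T : ℝ≥0∞, 0 < T →
    (∃ ub : M → ℝ → ℝ, Measurable (Function.uncurry ub) ∧ (∀ x t, 0 ≤ ub x t) ∧
      ∀ᵐ z ∂(G.vol.prod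
          (volume.restrict {t : ℝ | 0 < t ∧ ENNReal.ofReal t < T})),
        G.PsiL p μ ub z.1 z.2 ≤ ENNReal.ofReal (ub z.1 z.2)) →
    ∃ u : M → ℝ → ℝ, Measurable (Function.uncurry u) ∧
      ∀ᵐ z ∂(G.vol.prod
          (volume.restrict {t : ℝ | 0 < t ∧ ENNReal.ofReal t < T})),
        0 ≤ u z.1 z.2 ∧ ENNReal.ofReal (u z.1 z.2) = G.PsiL p μ u z.1 z.2 := by
  intro N hN p hp M _ _ _ _ _ G μ hμc T hT h
  obtain ⟨ub, hubm, hub0, hub⟩ := h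
  have hp0 : (0:ℝ) ≤ p := by linarith
  set S : Set ℝ := {t : ℝ | 0 < t ∧ ENNReal.ofReal t < T} with hSdef
  have hS : MeasurableSet S := by
    have h1 : S = Set.Ioi 0 ∩ {t : ℝ | ENNReal.ofReal t < T} := rfl
    rw [h1]
    exact measurableSet_Ioi.inter
      (measurableSet_lt ENNReal.measurable_ofReal measurable_const)
  obtain ⟨x₀⟩ : Nonempty M := inferInstance
  -- σ-finiteness of vol
  have hK1m : Measurable fun y : M => G.K x₀ y 1 :=
    G.K_meas.comp (measurable_const.prodMk (measurable_id.prodMk measurable_const))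
  have hK1int : Integrable (fun y => G.K x₀ y 1) G.vol := by
    by_contra hcon
    have h1 := G.K_mass x₀ 1 one_pos
    rw [integral_undef hcon] at h1
    exact zero_ne_one h1
  haveI hvolSF : SigmaFinite G.vol :=
    aux_sigmaFinite_of_pos _ _ hK1m (fun y => G.K_pos x₀ y 1 one_pos)
      hK1int.lintegral_lt_top.ne
  -- the product measure is nonzero
  have hvolne : G.vol ≠ 0 := by
    intro h0
    have h1 := G.K_mass x₀ 1 one_pos
    rw [h0, integral_zero_measure] at h1
    exact zero_ne_one h1
  have hνne : volume.restrict S Set.univ ≠ 0 := by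
    rw [Measure.restrict_apply_univ]
    obtain ⟨ε, hε0, hεS⟩ : ∃ ε : ℝ, 0 < ε ∧ Set.Ioo 0 ε ⊆ S := by
      rcases eq_or_ne T ∞ with hT' | hT'
      · exact ⟨1, one_pos, fun t ht => ⟨ht.1, by simp [hT']⟩⟩
      · refine ⟨T.toReal, ENNReal.toReal_pos hT.ne' hT', fun t ht => ⟨ht.1, ?_⟩⟩
        exact (ENNReal.ofReal_lt_iff_lt_toReal ht.1.le hT').mpr ht.2
    have h2 : (0:ℝ≥0∞) < volume (Set.Ioo 0 ε) := by
      simp [Real.volume_Ioo, hε0]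
    exact (lt_of_lt_of_le h2 (measure_mono hεS)).ne'
  have hPne : G.vol.prod (volume.restrict S) ≠ 0 := by
    intro h0
    have h1 : (G.vol.prod (volume.restrict S)) (Set.univ ×ˢ Set.univ) = 0 := by
      rw [h0]; rfl
    rw [Measure.prod_prod] at h1
    rcases mul_eq_zero.mp h1 with h2 | h2
    · exact hvolne (Measure.measure_univ_eq_zero.mp h2)
    · exact hνne h2
  have haeS : ∀ᵐ z ∂(G.vol.prod (volume.restrict S)), z.2 ∈ S := by
    apply ae_iff.mpr
    have hset : {z : M × ℝ | ¬ z.2 ∈ S} = Set.univ ×ˢ Sᶜ := by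
      ext z; simp
    rw [hset, Measure.prod_prod, Measure.restrict_apply hS.compl]
    simp
  -- σ-finiteness of μ
  haveI hμSF : SigmaFinite μ := by
    haveI : (ae (G.vol.prod (volume.restrict S))).NeBot := ae_neBot.mpr hPne
    obtain ⟨z, hz1, hz2⟩ := (hub.and haeS).exists
    have hle : (∫⁻ y, ENNReal.ofReal (G.K z.1 y z.2) ∂μ) ≤ ENNReal.ofReal (ub z.1 z.2) :=
      le_trans le_self_add hz1
    exact aux_sigmaFinite_of_pos μ (fun y => G.K z.1 y z.2)
      (G.K_meas.comp (measurable_const.prodMk (measurable_id.prodMk measurable_const)))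
      (fun y => G.K_pos z.1 y z.2 hz2.1)
      (lt_of_le_of_lt hle ENNReal.ofReal_lt_top).ne
  -- measurability of Ψ
  have meaPsi : ∀ w : M → ℝ → ℝ, Measurable (Function.uncurry w) →
      Measurable (fun z : M × ℝ => G.PsiL p μ w z.1 z.2) := by
    intro w hw
    have hterm1 : Measurable fun z : M × ℝ => ∫⁻ y, ENNReal.ofReal (G.K z.1 y z.2) ∂μ := by
      apply Measurable.lintegral_prod_right'
        (f := fun q : (M × ℝ) × M => ENNReal.ofReal (G.K q.1.1 q.2 q.1.2))
      exact ENNReal.measurable_ofReal.comp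
        (G.K_meas.comp ((measurable_fst.fst).prodMk
          (measurable_snd.prodMk measurable_fst.snd)))
    have hFm : Measurable (fun q : (M × ℝ) × ℝ =>
        ∫⁻ y, ENNReal.ofReal (G.K q.1.1 y (q.1.2 - q.2) * w y q.2 ^ p) ∂G.vol) := by
      apply Measurable.lintegral_prod_right'
        (f := fun r : ((M × ℝ) × ℝ) × M =>
          ENNReal.ofReal (G.K r.1.1.1 r.2 (r.1.1.2 - r.1.2) * w r.2 r.1.2 ^ p))
      apply ENNReal.measurable_ofReal.comp
      apply Measurable.mul
      · exact G.K_meas.comp ((measurable_fst.fst.fst).prodMk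
          (measurable_snd.prodMk (measurable_fst.fst.snd.sub measurable_fst.snd)))
      · exact (Real.continuous_rpow_const hp0).measurable.comp
          (hw.comp (measurable_snd.prodMk measurable_fst.snd))
    have hterm2 : Measurable fun z : M × ℝ =>
        ∫⁻ s in Set.Ioo (0:ℝ) z.2,
          ∫⁻ y, ENNReal.ofReal (G.K z.1 y (z.2 - s) * w y s ^ p) ∂G.vol := by
      have hkey : (fun z : M × ℝ =>
          ∫⁻ s in Set.Ioo (0:ℝ) z.2,
            ∫⁻ y, ENNReal.ofReal (G.K z.1 y (z.2 - s) * w y s ^ p) ∂G.vol)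
          = fun z : M × ℝ => ∫⁻ s,
              ({q : (M × ℝ) × ℝ | 0 < q.2 ∧ q.2 < q.1.2}.indicator
                (fun q : (M × ℝ) × ℝ =>
                  ∫⁻ y, ENNReal.ofReal (G.K q.1.1 y (q.1.2 - q.2) * w y q.2 ^ p) ∂G.vol))
                (z, s) := by
        funext z
        rw [← lintegral_indicator measurableSet_Ioo]
        congr 1
      rw [hkey]
      apply Measurable.lintegral_prod_right'
      apply Measurable.indicator hFm
      exact (measurableSet_lt measurable_const measurable_snd).inter
        (measurableSet_lt measurable_snd measurable_fst.snd)
    exact hterm1.add hterm2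
  -- the iteration
  set v : ℕ → M → ℝ → ℝ := fun n => Nat.rec (motive := fun _ => M → ℝ → ℝ)
    (fun _ _ => 0)
    (fun _ vn x t => (min (G.PsiL p μ vn x t) (ENNReal.ofReal (ub x t))).toReal) n
    with hvdef
  have hvzero : ∀ x t, v 0 x t = 0 := fun _ _ => rfl
  have hvsucc : ∀ n x t, v (n + 1) x t
      = (min (G.PsiL p μ (v n) x t) (ENNReal.ofReal (ub x t))).toReal := fun _ _ _ => rfl
  have hv0 : ∀ n x t, 0 ≤ v n x t := by
    intro n x t
    cases n with
    | zero => rw [hvzero]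
    | succ m => rw [hvsucc]; exact ENNReal.toReal_nonneg
  have hvub : ∀ n x t, v n x t ≤ ub x t := by
    intro n x t
    cases n with
    | zero => rw [hvzero]; exact hub0 x t
    | succ m =>
      rw [hvsucc]
      calc (min (G.PsiL p μ (v m) x t) (ENNReal.ofReal (ub x t))).toReal
          ≤ (ENNReal.ofReal (ub x t)).toReal :=
            ENNReal.toReal_mono ENNReal.ofReal_ne_top (min_le_right _ _)
        _ = ub x t := ENNReal.toReal_ofReal (hub0 x t)
  have hPsimono : ∀ w w' : M → ℝ → ℝ, (∀ y s, 0 ≤ w y s) → (∀ y s, w y s ≤ w' y s) →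
      ∀ x t, G.PsiL p μ w x t ≤ G.PsiL p μ w' x t := by
    intro w w' hw hww' x t
    refine add_le_add le_rfl ?_
    refine lintegral_mono fun s => lintegral_mono fun y => ?_
    exact aux_ofReal_mul_rpow_mono (hw y s) (hww' y s) hp0
  have hvmono : ∀ n x t, v n x t ≤ v (n + 1) x t := by
    intro n
    induction n with
    | zero => intro x t; rw [hvzero]; exact hv0 1 x t
    | succ m ih =>
      intro x t
      rw [hvsucc m, hvsucc (m+1)]
      apply ENNReal.toReal_mono
      · exact ne_top_of_le_ne_top ENNReal.ofReal_ne_top (min_le_right _ _)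
      · exact min_le_min (hPsimono (v m) (v (m+1)) (hv0 m) (fun y s => ih y s) x t) le_rfl
  have hvmono' : ∀ x t, Monotone fun n => v n x t :=
    fun x t => monotone_nat_of_le_succ fun n => hvmono n x t
  have hvmeas : ∀ n, Measurable (Function.uncurry (v n)) := by
    intro n
    induction n with
    | zero => exact measurable_const
    | succ m ih =>
      have : Function.uncurry (v (m+1)) = fun z : M × ℝ =>
          (min (G.PsiL p μ (v m) z.1 z.2) (ENNReal.ofReal (ub z.1 z.2))).toReal := rfl
      rw [this]
      exact ENNReal.measurable_toReal.comp
        ((meaPsi (v m) ih).min (ENNReal.measurable_ofReal.comp hubm))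
  -- the limit
  set W : M × ℝ → ℝ≥0∞ := fun z => ⨆ n, ENNReal.ofReal (v n z.1 z.2) with hWdef
  have hWle : ∀ z : M × ℝ, W z ≤ ENNReal.ofReal (ub z.1 z.2) :=
    fun z => iSup_le fun n => ENNReal.ofReal_le_ofReal (hvub n z.1 z.2)
  have hWtop : ∀ z : M × ℝ, W z ≠ ∞ :=
    fun z => (lt_of_le_of_lt (hWle z) ENNReal.ofReal_lt_top).ne
  set u : M → ℝ → ℝ := fun x t => (W (x, t)).toReal with hudef
  have humeas : Measurable (Function.uncurry u) := by
    have h1 : Function.uncurry u = fun z : M × ℝ => (W z).toReal := rfl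
    rw [h1]
    exact ENNReal.measurable_toReal.comp
      (Measurable.iSup fun n => ENNReal.measurable_ofReal.comp (hvmeas n))
  have hu0 : ∀ x t, 0 ≤ u x t := fun _ _ => ENNReal.toReal_nonneg
  have hulim : ∀ x t, Tendsto (fun n => v n x t) atTop (𝓝 (u x t)) := by
    intro x t
    have h1 : Tendsto (fun n => ENNReal.ofReal (v n x t)) atTop (𝓝 (W (x, t))) :=
      tendsto_atTop_iSup fun n m hnm => ENNReal.ofReal_le_ofReal (hvmono' x t hnm)
    have h2 := (ENNReal.tendsto_toReal (hWtop (x, t))).comp h1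
    have h3 : (fun n => (ENNReal.ofReal (v n x t)).toReal) = fun n => v n x t := by
      funext n; exact ENNReal.toReal_ofReal (hv0 n x t)
    rwa [show (ENNReal.toReal ∘ fun n => ENNReal.ofReal (v n x t))
      = fun n => v n x t from h3] at h2
  have hofRealu : ∀ x t, ENNReal.ofReal (u x t) = W (x, t) :=
    fun x t => ENNReal.ofReal_toReal (hWtop (x, t))
  -- pointwise identity ⨆ₙ Ψ[vₙ] = Ψ[u]
  have hsupPsi : ∀ x t, (⨆ n, G.PsiL p μ (v n) x t) = G.PsiL p μ u x t := by
    intro x t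
    simp only [RiemannianData.PsiL]
    rw [← ENNReal.add_iSup]
    congr 1
    have hFnm : ∀ n : ℕ, Measurable fun s : ℝ =>
        ∫⁻ y, ENNReal.ofReal (G.K x y (t - s) * v n y s ^ p) ∂G.vol := by
      intro n
      apply Measurable.lintegral_prod_right'
        (f := fun r : ℝ × M =>
          ENNReal.ofReal (G.K x r.2 (t - r.1) * v n r.2 r.1 ^ p))
      apply ENNReal.measurable_ofReal.comp
      apply Measurable.mul
      · exact G.K_meas.comp (measurable_const.prodMk
          (measurable_snd.prodMk ((measurable_const.sub measurable_fst))))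
      · exact (Real.continuous_rpow_const hp0).measurable.comp
          ((hvmeas n).comp (measurable_snd.prodMk measurable_fst))
    have hFmono : Monotone fun n : ℕ => fun s : ℝ =>
        ∫⁻ y, ENNReal.ofReal (G.K x y (t - s) * v n y s ^ p) ∂G.vol := by
      apply monotone_nat_of_le_succ
      intro n s
      exact lintegral_mono fun y =>
        aux_ofReal_mul_rpow_mono (hv0 n y s) (hvmono n y s) hp0
    rw [← lintegral_iSup hFnm hFmono]
    apply setLIntegral_congr_fun measurableSet_Ioo
    intro s hs
    have hmy : ∀ n : ℕ, Measurable fun y : M =>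
        ENNReal.ofReal (G.K x y (t - s) * v n y s ^ p) := by
      intro n
      apply ENNReal.measurable_ofReal.comp
      apply Measurable.mul
      · exact G.K_meas.comp (measurable_const.prodMk
          (measurable_id.prodMk measurable_const))
      · exact (Real.continuous_rpow_const hp0).measurable.comp
          ((hvmeas n).comp (measurable_id.prodMk measurable_const))
    have hmony : Monotone fun n : ℕ => fun y : M =>
        ENNReal.ofReal (G.K x y (t - s) * v n y s ^ p) := by
      apply monotone_nat_of_le_succ
      intro n y
      exact aux_ofReal_mul_rpow_mono (hv0 n y s) (hvmono n y s) hp0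
    beta_reduce
    rw [← lintegral_iSup hmy hmony]
    apply lintegral_congr fun y => ?_
    -- ⨆ n, ofReal (K * vₙ^p) = ofReal (K * u^p)
    have hmon : Monotone fun n : ℕ =>
        ENNReal.ofReal (G.K x y (t - s) * v n y s ^ p) :=
      monotone_nat_of_le_succ fun n =>
        aux_ofReal_mul_rpow_mono (hv0 n y s) (hvmono n y s) hp0
    have htend : Tendsto (fun n : ℕ =>
        ENNReal.ofReal (G.K x y (t - s) * v n y s ^ p)) atTop
        (𝓝 (ENNReal.ofReal (G.K x y (t - s) * u y s ^ p))) := by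
      apply (ENNReal.continuous_ofReal.tendsto _).comp
      apply Filter.Tendsto.const_mul
      exact ((Real.continuousAt_rpow_const (u y s) p (Or.inr hp0)).tendsto).comp
        (hulim y s)
    exact tendsto_nhds_unique (tendsto_atTop_iSup hmon) htend
  -- a.e. identity for the iterates
  have hA : ∀ n : ℕ, ∀ᵐ z ∂(G.vol.prod (volume.restrict S)),
      ENNReal.ofReal (v (n + 1) z.1 z.2) = G.PsiL p μ (v n) z.1 z.2 := by
    intro n
    filter_upwards [hub] with z hz
    have hle : G.PsiL p μ (v n) z.1 z.2 ≤ ENNReal.ofReal (ub z.1 z.2) :=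
      le_trans (hPsimono (v n) ub (hv0 n) (fun y s => hvub n y s) z.1 z.2) hz
    rw [hvsucc, min_eq_left hle,
      ENNReal.ofReal_toReal (lt_of_le_of_lt hle ENNReal.ofReal_lt_top).ne]
  refine ⟨u, humeas, ?_⟩
  filter_upwards [ae_all_iff.mpr hA] with z hz
  refine ⟨hu0 z.1 z.2, ?_⟩
  rw [hofRealu z.1 z.2]
  have h1 : W (z.1, z.2) = ⨆ n, ENNReal.ofReal (v (n + 1) z.1 z.2) := by
    apply le_antisymm
    · exact iSup_le fun n => le_trans (ENNReal.ofReal_le_ofReal (hvmono n z.1 z.2))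
        (le_iSup (fun m => ENNReal.ofReal (v (m + 1) z.1 z.2)) n)
    · exact iSup_le fun n => le_iSup (fun m => ENNReal.ofReal (v m z.1 z.2)) (n + 1)
  rw [h1, iSup_congr hz, hsupPsi z.1 z.2]
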